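/- For bounded operators T, S on a complex Hilbert space H, T is Birkhoff–James numerical radius orthogonal to S (i.e. w(T + ξS) ≥ w(T) for all ξ ∈ ℂ) if and only if w(T + ξS)² ≥ w(T)² + |ξ|²·c(S)² for all ξ ∈ ℂ, where w(T) = sup{|⟨Tx,x⟩| : ‖x‖=1} and c(S) = inf{|⟨Sx,x⟩| : ‖x‖=1}. -/

import Mathlib

/-!
Fix `ξ` and a unit vector `x`, and put `a = ⟪x, T x⟫`, `b = ξ ⟪x, S x⟫`. For `0 < t ≤ 1` the
convexity identity `‖a + t b‖² + t(1-t)‖b‖² = t‖a + b‖² + (1-t)‖a‖²`, with `‖b‖ ≥ |ξ| c(S)`,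
gives after taking suprema over `x`
`w(T + tξS)² + t(1-t)|ξ|²c(S)² ≤ t w(T + ξS)² + (1-t) w(T)²`.
If `w(T + tξS) ≥ w(T)`, dividing by `t` leaves `w(T)² + (1-t)|ξ|²c(S)² ≤ w(T + ξS)²`,
and `t → 0` gives the claimed inequality. The converse is immediate.
-/

open Filter Topology

/-- The numerical radius `w(T) = sup {|⟨Tx, x⟩| : ‖x‖ = 1}` (paper convention
`⟨Tx, x⟩` corresponds to Mathlib's `⟪ x, T x ⟫`). -/
noncomputable def numRad {H : Type*} [NormedAddCommGroup H] [InnerProductSpace ℂ H]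
    (T : H →L[ℂ] H) : ℝ :=
  sSup {r : ℝ | ∃ x : H, ‖x‖ = 1 ∧ r = ‖@inner ℂ H _ x (T x)‖}

/-- The Crawford number `c(S) = inf {|⟨Sx, x⟩| : ‖x‖ = 1}`. -/
noncomputable def crawford {H : Type*} [NormedAddCommGroup H] [InnerProductSpace ℂ H]
    (S : H →L[ℂ] H) : ℝ :=
  sInf {r : ℝ | ∃ x : H, ‖x‖ = 1 ∧ r = ‖@inner ℂ H _ x (S x)‖}

open Set
open scoped InnerProductSpace

theorem norm_add_smul_sq_add {E : Type*} [NormedAddCommGroup E] [InnerProductSpace ℝ E]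
    (a u : E) (t : ℝ) :
    ‖a + t • u‖ ^ 2 + t * (1 - t) * ‖u‖ ^ 2 = t * ‖a + u‖ ^ 2 + (1 - t) * ‖a‖ ^ 2 := by
  rw [norm_add_sq_real, norm_add_sq_real, norm_smul, inner_smul_right, Real.norm_eq_abs,
    mul_pow, sq_abs]
  ring

section NumericalRadius

variable {H : Type*} [NormedAddCommGroup H] [InnerProductSpace ℂ H]

theorem norm_inner_apply_le_numRad (T : H →L[ℂ] H) {x : H} (hx : ‖x‖ = 1) :
    ‖⟪x, T x⟫_ℂ‖ ≤ numRad T := by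
  refine le_csSup ⟨‖T‖, ?_⟩ ⟨x, hx, rfl⟩
  rintro _ ⟨y, hy, rfl⟩
  calc ‖⟪y, T y⟫_ℂ‖ ≤ ‖y‖ * ‖T y‖ := norm_inner_le_norm y (T y)
    _ ≤ ‖y‖ * (‖T‖ * ‖y‖) := by gcongr; exact T.le_opNorm y
    _ = ‖T‖ := by rw [hy, one_mul, mul_one]

theorem numRad_nonneg (T : H →L[ℂ] H) : 0 ≤ numRad T :=
  Real.sSup_nonneg fun _ ⟨_, _, hr⟩ ↦ hr ▸ norm_nonneg _

theorem crawford_nonneg (S : H →L[ℂ] H) : 0 ≤ crawford S :=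
  Real.sInf_nonneg fun _ ⟨_, _, hr⟩ ↦ hr ▸ norm_nonneg _

theorem crawford_le_norm_inner_apply (S : H →L[ℂ] H) {x : H} (hx : ‖x‖ = 1) :
    crawford S ≤ ‖⟪x, S x⟫_ℂ‖ :=
  csInf_le ⟨0, fun _ ⟨_, _, hr⟩ ↦ hr ▸ norm_nonneg _⟩ ⟨x, hx, rfl⟩

theorem numRad_sq_le [Nontrivial H] {T : H →L[ℂ] H} {M : ℝ}
    (h : ∀ x : H, ‖x‖ = 1 → ‖⟪x, T x⟫_ℂ‖ ^ 2 ≤ M) : numRad T ^ 2 ≤ M := by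
  obtain ⟨x₀, hx₀⟩ := exists_norm_eq H zero_le_one
  have hM : 0 ≤ M := (sq_nonneg _).trans (h x₀ hx₀)
  refine (Real.le_sqrt (numRad_nonneg T) hM).mp (csSup_le ⟨_, x₀, hx₀, rfl⟩ ?_)
  rintro _ ⟨x, hx, rfl⟩
  exact Real.le_sqrt_of_sq_le (h x hx)

theorem numRad_add_smul_sq_le [Nontrivial H] (T S : H →L[ℂ] H) (ξ : ℂ) {t : ℝ}
    (ht₀ : 0 ≤ t) (ht₁ : t ≤ 1) :
    numRad (T + ((t : ℂ) * ξ) • S) ^ 2 + t * (1 - t) * ‖ξ‖ ^ 2 * crawford S ^ 2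
      ≤ t * numRad (T + ξ • S) ^ 2 + (1 - t) * numRad T ^ 2 := by
  have hK : 0 ≤ t * (1 - t) := mul_nonneg ht₀ (sub_nonneg.mpr ht₁)
  rw [← le_sub_iff_add_le]
  refine numRad_sq_le fun x hx ↦ ?_
  have hc : ‖ξ‖ * crawford S ≤ ‖ξ * ⟪x, S x⟫_ℂ‖ := by
    rw [norm_mul]
    gcongr
    exact crawford_le_norm_inner_apply S hx
  have hconv := norm_add_smul_sq_add ⟪x, T x⟫_ℂ (ξ * ⟪x, S x⟫_ℂ) t
  have hξ := norm_inner_apply_le_numRad (T + ξ • S) hx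
  have hT := norm_inner_apply_le_numRad T hx
  simp only [add_apply, smul_apply, inner_add_right, inner_smul_right, Complex.real_smul,
    mul_assoc] at hconv hξ ⊢
  have hc₀ : 0 ≤ ‖ξ‖ * crawford S := mul_nonneg (norm_nonneg ξ) (crawford_nonneg S)
  have hξ' := mul_le_mul_of_nonneg_left (pow_le_pow_left₀ (norm_nonneg _) hξ 2) ht₀
  have hT' := mul_le_mul_of_nonneg_left (pow_le_pow_left₀ (norm_nonneg _) hT 2)
    (sub_nonneg.mpr ht₁)
  have hc' := mul_le_mul_of_nonneg_left (pow_le_pow_left₀ hc₀ hc 2) hK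
  rw [mul_pow] at hc'
  linarith

end NumericalRadius

theorem numRad_BJ_orthogonal_iff_sq_ineq_general
    {H : Type*} [NormedAddCommGroup H] [InnerProductSpace ℂ H]
    [Nontrivial H] (T S : H →L[ℂ] H) :
    (∀ ξ : ℂ, numRad T ≤ numRad (T + ξ • S)) ↔
      (∀ ξ : ℂ,
        numRad T ^ 2 + ‖ξ‖ ^ 2 * crawford S ^ 2 ≤ numRad (T + ξ • S) ^ 2) := by
  constructor
  · intro h ξ
    set B := ‖ξ‖ ^ 2 * crawford S ^ 2
    have key : ∀ t ∈ Ioc (0 : ℝ) 1, numRad T ^ 2 + (1 - t) * B ≤ numRad (T + ξ • S) ^ 2 := by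
      rintro t ⟨ht₀, ht₁⟩
      have hconv := numRad_add_smul_sq_le T S ξ ht₀.le ht₁
      have hBJ := pow_le_pow_left₀ (numRad_nonneg T) (h ((t : ℂ) * ξ)) 2
      refine le_of_mul_le_mul_left ?_ ht₀
      linarith
    have hlim : Tendsto (fun t : ℝ ↦ numRad T ^ 2 + (1 - t) * B) (𝓝[>] 0)
        (𝓝 (numRad T ^ 2 + B)) := by
      have hcont : Continuous fun t : ℝ ↦ numRad T ^ 2 + (1 - t) * B := by fun_prop
      simpa using (hcont.tendsto 0).mono_left nhdsWithin_le_nhds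
    exact le_of_tendsto hlim (eventually_of_mem (Ioc_mem_nhdsGT one_pos) key)
  · intro h ξ
    have hsq : numRad T ^ 2 ≤ numRad (T + ξ • S) ^ 2 :=
      (le_add_of_nonneg_right (by positivity)).trans (h ξ)
    exact (pow_le_pow_iff_left₀ (numRad_nonneg T) (numRad_nonneg _) two_ne_zero).mp hsq

theorem numRad_BJ_orthogonal_iff_sq_ineq
    {H : Type*} [NormedAddCommGroup H] [InnerProductSpace ℂ H] [CompleteSpace H]
    [Nontrivial H] (T S : H →L[ℂ] H) :
    (∀ ξ : ℂ, numRad T ≤ numRad (T + ξ • S)) ↔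
      (∀ ξ : ℂ,
        numRad T ^ 2 + ‖ξ‖ ^ 2 * crawford S ^ 2 ≤ numRad (T + ξ • S) ^ 2) :=
  numRad_BJ_orthogonal_iff_sq_ineq_general T S
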